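/- arXiv:1410.1958 — 9 statements merged into one kernel-verified Lean document; each statement's English description precedes it below -/
import Mathlib

section
/- Let G be a subgroup of the symmetric group S_n and let χ : G → ℂ be a character of degree 1 (a group homomorphism into the complex numbers whose values have modulus one). Let A = [A_{i,j}], B = [B_{i,j}], C = [C_{i,j}] be m×m block matrices with n×n complex blocks, each positive semidefinite as mn×mn matrices. Then, in the Loewner order on m×m complex matrices, [d_χ^G(A_{i,j} + B_{i,j} + C_{i,j})]_{i,j=1}^m + [d_χ^G(C_{i,j})]_{i,j=1}^m ≥ [d_χ^G(A_{i,j} + C_{i,j})]_{i,j=1}^m + [d_χ^G(B_{i,j} + C_{i,j})]_{i,j=1}^m. That is, generalized matrix functions are completely strongly superadditive over the cone of positive semidefinite matrices. -/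
/-!
Factor each block matrix as a Gram matrix, `X p q i j = ⟨r^X_(p,i), r^X_(q,j)⟩`. Expanding the
products in `d_χ^G` over colorings `f : Fin n → {A, B, C}` of the positions, inclusion–exclusion
turns the left side minus the right side into `∑_σ χ σ ∑_f ∏_i X_(f i) p q i (σ i)`, summed over
the colorings using both `A` and `B`. That set of colorings is permutation invariant, so the matrix
is a character-twisted Gram matrix `[∑_σ χ σ ⟨v_p, σ • v_q⟩]_(p,q)` of tensor products
`v_p = ⊕_f ⊗_i r^(X_(f i))_(p,i)`. Since `|χ| = 1` on a finite group, such a matrix equals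
`|G|⁻¹ Ψᴴ Ψ` with `Ψ = ∑_σ χ σ (σ • v)`, hence is positive semidefinite.
-/

open Matrix
open scoped ComplexOrder

open scoped Classical in
/-- Generalized matrix function `d_χ^G(A) = ∑_{σ ∈ G} χ(σ) ∏_i a_{i σ(i)}`. -/
noncomputable def gmf {n : ℕ} (G : Subgroup (Equiv.Perm (Fin n))) (χ : G →* ℂ)
    (A : Matrix (Fin n) (Fin n) ℂ) : ℂ :=
  ∑ σ : G, χ σ * ∏ i, A i ((σ : Equiv.Perm (Fin n)) i)

/-- The `mn × mn` matrix obtained from an `m × m` block matrix with `n × n` blocks. -/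
def blockMx {m n : ℕ} (A : Fin m → Fin m → Matrix (Fin n) (Fin n) ℂ) :
    Matrix (Fin m × Fin n) (Fin m × Fin n) ℂ :=
  Matrix.of fun p q => A p.1 q.1 p.2 q.2

open Finset

theorem MonoidHom.star_apply_mul_apply_of_finite {G : Type*} [Group G] [Finite G] (χ : G →* ℂ)
    (g : G) : star (χ g) * χ g = 1 := by
  have hnorm : ‖χ g‖ = 1 :=
    Complex.norm_eq_one_of_pow_eq_one (by rw [← map_pow, pow_card_eq_one', map_one])
      Nat.card_pos.ne'
  rw [Complex.star_def, Complex.conj_mul', hnorm]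
  norm_num

section TwistedGram

variable {G U ι : Type*} [Group G] [Fintype G] [MulAction G U] [Fintype U]

def twistedGram (χ : G →* ℂ) (H : ι → U → ℂ) : Matrix ι ι ℂ :=
  of fun p q => ∑ g, χ g * ∑ u, star (H p u) * H q (g • u)

def charAverage (χ : G →* ℂ) (H : ι → U → ℂ) : Matrix U ι ℂ :=
  of fun u r => ∑ g, χ g * H r (g • u)

theorem conjTranspose_charAverage_mul_self (χ : G →* ℂ) (H : ι → U → ℂ) :
    (charAverage χ H)ᴴ * charAverage χ H = (Fintype.card G : ℂ) • twistedGram χ H := by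
  ext p q
  have hshift (g ρ : G) :
      ∑ u, star (H p (g • u)) * H q ((ρ * g) • u) = ∑ u, star (H p u) * H q (ρ • u) := by
    simp only [mul_smul]
    exact Equiv.sum_comp (MulAction.toPerm g) fun u => star (H p u) * H q (ρ • u)
  calc ((charAverage χ H)ᴴ * charAverage χ H) p q
      = ∑ g, ∑ h, star (χ g) * χ h * ∑ u, star (H p (g • u)) * H q (h • u) := by
        simp only [mul_apply, conjTranspose_apply, charAverage, of_apply, star_sum, star_mul',
          sum_mul, mul_sum]
        rw [sum_comm]
        conv_rhs => rw [sum_comm]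
        refine sum_congr rfl fun h _ => ?_
        rw [sum_comm]
        refine sum_congr rfl fun g _ => sum_congr rfl fun u _ => ?_
        ring
    _ = ∑ _g : G, ∑ ρ, χ ρ * ∑ u, star (H p u) * H q (ρ • u) := by
        refine sum_congr rfl fun g _ => ?_
        rw [← Equiv.sum_comp (Equiv.mulRight g)]
        refine sum_congr rfl fun ρ _ => ?_
        rw [Equiv.coe_mulRight, map_mul, hshift]
        linear_combination (χ ρ * ∑ u, star (H p u) * H q (ρ • u)) *
          χ.star_apply_mul_apply_of_finite g
    _ = ((Fintype.card G : ℂ) • twistedGram χ H) p q := by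
        simp [twistedGram, sum_const, card_univ]

theorem twistedGram_posSemidef [Finite ι] (χ : G →* ℂ) (H : ι → U → ℂ) :
    (twistedGram χ H).PosSemidef := by
  have hcard : (Fintype.card G : ℂ) ≠ 0 := Nat.cast_ne_zero.mpr Fintype.card_ne_zero
  have h := (posSemidef_conjTranspose_mul_self (charAverage χ H)).smul
    (inv_nonneg.mpr (Nat.cast_nonneg (Fintype.card G) : (0 : ℂ) ≤ Fintype.card G))
  rwa [conjTranspose_charAverage_mul_self, smul_smul, inv_mul_cancel₀ hcard, one_smul] at h

end TwistedGram

def mixedColorings (ι : Type*) [Fintype ι] [DecidableEq ι] : Finset (ι → Fin 3) :=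
  {f | (∃ i, f i = 0) ∧ ∃ i, f i = 1}

theorem comp_mem_mixedColorings_iff {ι : Type*} [Fintype ι] [DecidableEq ι] (f : ι → Fin 3)
    (σ : Equiv.Perm ι) : f ∘ σ ∈ mixedColorings ι ↔ f ∈ mixedColorings ι := by
  simp only [mixedColorings, mem_filter, mem_univ, true_and, Function.comp_apply,
    σ.surjective.exists (p := fun i => f i = _)]

theorem sum_mixedColorings_prod {R ι : Type*} [CommRing R] [Fintype ι] [DecidableEq ι]
    (x : ι → Fin 3 → R) :
    ∑ f ∈ mixedColorings ι, ∏ i, x i (f i) =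
      ∏ i, (x i 0 + x i 1 + x i 2) + ∏ i, x i 2 - ∏ i, (x i 0 + x i 2) -
        ∏ i, (x i 1 + x i 2) := by
  let P (s : Finset (Fin 3)) : Finset (ι → Fin 3) := Fintype.piFinset fun _ => s
  have hP (s : Finset (Fin 3)) : ∏ i, ∑ t ∈ s, x i t = ∑ f ∈ P s, ∏ i, x i (f i) :=
    prod_univ_sum _ _
  have hmixed : mixedColorings ι = univ \ (P {0, 2} ∪ P {1, 2}) := by
    have h1 : ∀ t : Fin 3, t ≠ 0 ∧ t ≠ 2 ↔ t = 1 := by decide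
    have h0 : ∀ t : Fin 3, t ≠ 1 ∧ t ≠ 2 ↔ t = 0 := by decide
    ext f
    simp only [mixedColorings, P, mem_filter, mem_sdiff, mem_union, Fintype.mem_piFinset,
      mem_insert, mem_singleton, mem_univ, true_and, not_or, not_forall, h0, h1]
    exact and_comm
  have hinter : P {0, 2} ∩ P {1, 2} = P {2} := by
    simp only [P, ← Fintype.piFinset_inter]
    rfl
  have hsdiff := sum_sdiff (subset_univ (P {0, 2} ∪ P {1, 2})) (f := fun f => ∏ i, x i (f i))
  have hunion := sum_union_inter (s₁ := P {0, 2}) (s₂ := P {1, 2}) (f := fun f => ∏ i, x i (f i))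
  rw [← hmixed] at hsdiff
  rw [hinter] at hunion
  have h012 := hP univ
  have h2 := hP {2}
  have h02 := hP {0, 2}
  have h12 := hP {1, 2}
  simp only [P, Fintype.piFinset_univ, Fin.sum_univ_three, sum_singleton,
    sum_pair (show (0 : Fin 3) ≠ 2 by decide), sum_pair (show (1 : Fin 3) ≠ 2 by decide)] at *
  linear_combination hsdiff - hunion - h012 - h2 + h02 + h12

section

attribute [local instance] arrowAction

open scoped Classical in
theorem posSemidef_sum_prod_of_perm_invariant {n m : ℕ} {T : Type*} [Fintype T]
    (G : Subgroup (Equiv.Perm (Fin n))) (χ : G →* ℂ)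
    (X : T → Fin m → Fin m → Matrix (Fin n) (Fin n) ℂ) (hX : ∀ t, (blockMx (X t)).PosSemidef)
    (S : Finset (Fin n → T)) (hS : ∀ σ : G, ∀ f, f ∘ (σ : Equiv.Perm (Fin n)) ∈ S ↔ f ∈ S) :
    (of fun p q => ∑ σ : G, χ σ *
      ∑ f ∈ S, ∏ i, X (f i) p q i ((σ : Equiv.Perm (Fin n)) i)).PosSemidef := by
  open scoped MatrixOrder in
  choose R hR using fun t => CStarAlgebra.nonneg_iff_eq_star_mul_self.mp (hX t).nonneg
  have hgram (t : T) (p q : Fin m) (i j : Fin n) :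
      X t p q i j = ∑ k, star (R t k (p, i)) * R t k (q, j) := by
    simpa [blockMx, mul_apply] using congrFun (congrFun (hR t) (p, i)) (q, j)
  -- `H p` is the tensor product over `i` of the Gram vectors of the rows `(p, i)`, placed in the
  -- summand indexed by the coloring `f`.
  let H (p : Fin m) (u : (Fin n → T) × (Fin n → Fin m × Fin n)) : ℂ :=
    if u.1 ∈ S then ∏ i, R (u.1 i) (u.2 i) (p, i) else 0
  convert twistedGram_posSemidef χ H using 1
  ext p q
  refine sum_congr rfl fun σ _ => congrArg (χ σ * ·) ?_
  have hreindex (f : Fin n → T) (w : Fin n → Fin m × Fin n) :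
      ∏ j, R ((σ • f) j) ((σ • w) j) (q, j) =
        ∏ i, R (f i) (w i) (q, (σ : Equiv.Perm (Fin n)) i) := by
    rw [← Equiv.prod_comp (σ : Equiv.Perm (Fin n))]
    refine prod_congr rfl fun i _ => ?_
    show R (f (σ⁻¹ • σ • i)) (w (σ⁻¹ • σ • i)) (q, σ • i) = _
    rw [inv_smul_smul]
    rfl
  calc ∑ f ∈ S, ∏ i, X (f i) p q i ((σ : Equiv.Perm (Fin n)) i)
      = ∑ f ∈ S, ∑ w : Fin n → Fin m × Fin n,
          ∏ i, star (R (f i) (w i) (p, i)) * R (f i) (w i) (q, (σ : Equiv.Perm (Fin n)) i) := by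
        simp only [hgram, Fintype.prod_sum]
    _ = ∑ f, ∑ w, star (H p (f, w)) * H q (σ • (f, w)) := by
        rw [← Fintype.sum_ite_mem]
        refine sum_congr rfl fun f _ => ?_
        have hσf : σ • f ∈ S ↔ f ∈ S := hS σ⁻¹ f
        by_cases hf : f ∈ S
        · rw [if_pos hf]
          refine sum_congr rfl fun w _ => ?_
          simp only [H, Prod.smul_mk, hf, hσf, if_true, star_prod, hreindex, ← prod_mul_distrib]
        · simp [H, hf]
    _ = ∑ u, star (H p u) * H q (σ • u) := by rw [Fintype.sum_prod_type]

end

open scoped Classical in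
theorem gmf_inclusion_exclusion {n : ℕ} (G : Subgroup (Equiv.Perm (Fin n))) (χ : G →* ℂ)
    (A B C : Matrix (Fin n) (Fin n) ℂ) :
    gmf G χ (A + B + C) + gmf G χ C - gmf G χ (A + C) - gmf G χ (B + C) =
      ∑ σ : G, χ σ *
        ∑ f ∈ mixedColorings (Fin n), ∏ i, ![A, B, C] (f i) i ((σ : Equiv.Perm (Fin n)) i) := by
  simp only [gmf, ← sum_add_distrib, ← sum_sub_distrib, ← mul_add, ← mul_sub]
  refine sum_congr rfl fun σ _ => congrArg (χ σ * ·) ?_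
  exact (sum_mixedColorings_prod fun i t => ![A, B, C] t i ((σ : Equiv.Perm (Fin n)) i)).symm

theorem gmf_completely_strongly_superadditive_general {n m : ℕ}
    (G : Subgroup (Equiv.Perm (Fin n))) (χ : G →* ℂ)
    (A B C : Fin m → Fin m → Matrix (Fin n) (Fin n) ℂ)
    (hA : (blockMx A).PosSemidef) (hB : (blockMx B).PosSemidef)
    (hC : (blockMx C).PosSemidef) :
    ((Matrix.of fun i j => gmf G χ (A i j + B i j + C i j)) +
        (Matrix.of fun i j => gmf G χ (C i j)) -
        (Matrix.of fun i j => gmf G χ (A i j + C i j)) -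
        (Matrix.of fun i j => gmf G χ (B i j + C i j))).PosSemidef := by
  classical
  convert posSemidef_sum_prod_of_perm_invariant G χ (fun t p q => ![A p q, B p q, C p q] t) ?_
    (mixedColorings (Fin n)) (fun σ f => comp_mem_mixedColorings_iff f σ) using 1
  · ext p q
    exact gmf_inclusion_exclusion G χ (A p q) (B p q) (C p q)
  · intro t
    fin_cases t
    exacts [hA, hB, hC]

/-- Generalized matrix functions are completely strongly superadditive over the cone of
positive semidefinite matrices. -/
theorem gmf_completely_strongly_superadditive {n m : ℕ}
    (G : Subgroup (Equiv.Perm (Fin n))) (χ : G →* ℂ)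
    (hχ : ∀ g : G, ‖χ g‖ = 1)
    (A B C : Fin m → Fin m → Matrix (Fin n) (Fin n) ℂ)
    (hA : (blockMx A).PosSemidef) (hB : (blockMx B).PosSemidef)
    (hC : (blockMx C).PosSemidef) :
    ((Matrix.of fun i j => gmf G χ (A i j + B i j + C i j)) +
        (Matrix.of fun i j => gmf G χ (C i j)) -
        (Matrix.of fun i j => gmf G χ (A i j + C i j)) -
        (Matrix.of fun i j => gmf G χ (B i j + C i j))).PosSemidef :=
  gmf_completely_strongly_superadditive_general G χ A B C hA hB hC
end

section
/- Let A = [A_{i,j}], B = [B_{i,j}], C = [C_{i,j}] be m×m block matrices with n×n complex blocks, each positive semidefinite as mn×mn matrices. Then, in the Loewner order on m×m complex matrices, [det(A_{i,j} + B_{i,j} + C_{i,j})]_{i,j=1}^m + [det(C_{i,j})]_{i,j=1}^m ≥ [det(A_{i,j} + C_{i,j})]_{i,j=1}^m + [det(B_{i,j} + C_{i,j})]_{i,j=1}^m. That is, the determinant is completely strongly superadditive over the cone of positive semidefinite matrices. -/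
open Matrix
open scoped ComplexOrder

/-!
Expanding the determinant multilinearly in the rows, and using inclusion–exclusion,
`det (a + b + c) + det c - det (a + c) - det (b + c)` is the sum of the determinants of all
matrices whose rows are taken from `a`, `b` or `c` with at least one row from `a` and one from
`b`. This set of row choices is stable under permuting the rows, so `n!` times the sum regroups
into mixed discriminants. For Gram blocks `Xₖᵢⱼ = Uᵢₖᴴ Uⱼₖ` a Cauchy–Binet expansion writes the
matrix `[D(X₁ᵢⱼ, …, Xₙᵢⱼ)]ᵢⱼ` as `Gᴴ G`, where `G r i` is the determinant of the matrix whose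
`k`-th row is row `r k` of `Uᵢₖ`.
-/

open Finset Equiv

theorem Finset.sum_add_sum_piFinset_sub_sum_piFinset {ι G : Type*} [Fintype ι] [DecidableEq ι]
    [AddCommGroup G] (f : (ι → Fin 3) → G) :
    ∑ g, f g + ∑ g ∈ Fintype.piFinset (fun _ => {2}), f g
      - ∑ g ∈ Fintype.piFinset (fun _ => {0, 2}), f g
      - ∑ g ∈ Fintype.piFinset (fun _ => {1, 2}), f g
      = ∑ g with 0 ∈ Set.range g ∧ 1 ∈ Set.range g, f g := by
  have hinter : Fintype.piFinset (fun _ : ι => ({0, 2} : Finset (Fin 3))) ∩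
      Fintype.piFinset (fun _ => {1, 2}) = Fintype.piFinset (fun _ => {2}) := by
    rw [← Fintype.piFinset_inter]
    rfl
  have hunion : Fintype.piFinset (fun _ : ι => ({0, 2} : Finset (Fin 3))) ∪
      Fintype.piFinset (fun _ => {1, 2}) =
        ({g | ¬(0 ∈ Set.range g ∧ 1 ∈ Set.range g)} : Finset _) := by
    ext g
    simp only [mem_union, Fintype.mem_piFinset, mem_insert, mem_singleton, mem_filter,
      mem_univ, true_and, Set.mem_range]
    grind
  have h := sum_union_inter (f := f) (s₁ := Fintype.piFinset fun _ : ι => ({0, 2} : Finset _))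
    (s₂ := Fintype.piFinset fun _ => {1, 2})
  rw [hinter, hunion] at h
  rw [← sum_filter_add_sum_filter_not univ fun g => 0 ∈ Set.range g ∧ 1 ∈ Set.range g]
  linear_combination (norm := abel) h

theorem Finset.sum_filter_sum_perm_comp {ι T M : Type*} [Fintype ι] [DecidableEq ι] [Fintype T]
    [AddCommMonoid M] (p : (ι → T) → Prop) [DecidablePred p]
    (hp : ∀ (g : ι → T) (τ : Perm ι), p (g ∘ τ) ↔ p g) (f : (ι → T) → M) :
    ∑ g with p g, ∑ τ : Perm ι, f (g ∘ τ) = Fintype.card (Perm ι) • ∑ g with p g, f g := by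
  rw [sum_comm, ← card_univ, ← sum_const]
  refine sum_congr rfl fun τ _ => ?_
  rw [sum_filter, sum_filter]
  exact Fintype.sum_equiv (Equiv.arrowCongr τ.symm (Equiv.refl T)) _ _ fun g =>
    if_congr (hp g τ).symm rfl rfl

namespace Matrix

section CommRing

variable {n T R : Type*} [Fintype n] [DecidableEq n] [CommRing R]

def mixRows (g : n → T) (X : T → Matrix n n R) : Matrix n n R :=
  of fun k l => X (g k) k l

/-- `n!` times the mixed discriminant of `X 1, …, X n`: the coefficient of `t₁ ⋯ tₙ` in
`det (∑ k, t k • X k)`. -/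
def mixedDiscr (X : n → Matrix n n R) : R :=
  ∑ τ : Perm n, (mixRows τ X).det

theorem det_eq_sum_sign_mul_prod (M : Matrix n n R) :
    M.det = ∑ σ : Perm n, Perm.sign σ * ∏ k, M k (σ k) := by
  rw [← det_transpose, det_apply']
  rfl

theorem det_sum_eq_sum_det_mixRows (S : Finset T) (X : T → Matrix n n R) :
    (∑ t ∈ S, X t).det = ∑ g ∈ Fintype.piFinset fun _ => S, (mixRows g X).det := by
  have hrows : ∑ t ∈ S, X t = of fun k => ∑ t ∈ S, X t k := by
    ext k l
    simp [sum_apply]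
  rw [hrows]
  exact detRowAlternating.toMultilinearMap.map_sum_finset (fun k t => X t k) fun _ => S

theorem det_add_add_add_det_sub_det_add_sub_det_add (a b c : Matrix n n R) :
    (a + b + c).det + c.det - (a + c).det - (b + c).det =
      ∑ g with 0 ∈ Set.range g ∧ 1 ∈ Set.range g, (mixRows g ![a, b, c]).det := by
  have habc : (a + b + c).det = ∑ g, (mixRows g ![a, b, c]).det := by
    rw [← Fintype.piFinset_univ, ← det_sum_eq_sum_det_mixRows, Fin.sum_univ_three]
    rfl
  have hc : c.det = ∑ g ∈ Fintype.piFinset fun _ => {2}, (mixRows g ![a, b, c]).det := by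
    rw [← det_sum_eq_sum_det_mixRows]
    simp
  have hac : (a + c).det =
      ∑ g ∈ Fintype.piFinset fun _ => {0, 2}, (mixRows g ![a, b, c]).det := by
    rw [← det_sum_eq_sum_det_mixRows]
    simp
  have hbc : (b + c).det =
      ∑ g ∈ Fintype.piFinset fun _ => {1, 2}, (mixRows g ![a, b, c]).det := by
    rw [← det_sum_eq_sum_det_mixRows]
    simp
  rw [habc, hc, hac, hbc]
  exact sum_add_sum_piFinset_sub_sum_piFinset _

theorem det_mixRows_perm (X : n → Matrix n n R) (π : Perm n) :
    (mixRows π X).det = Perm.sign π * (of fun k l => X k (π⁻¹ k) l).det := by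
  have h : (of fun k l => X k (π⁻¹ k) l) = (mixRows π X).submatrix (π⁻¹ : Perm n) id := by
    ext k l
    simp [mixRows]
  rw [h, det_permute, ← mul_assoc, ← Int.cast_mul, ← Units.val_mul, Perm.sign_inv,
    Int.units_mul_self, Units.val_one, Int.cast_one, one_mul]

theorem mixedDiscr_eq_sum_sign_mul_det (X : n → Matrix n n R) :
    mixedDiscr X = ∑ π : Perm n, Perm.sign π * (of fun k l => X k (π k) l).det := by
  rw [mixedDiscr, ← Equiv.sum_comp (Equiv.inv (Perm n))]
  simp [det_mixRows_perm]

theorem mixedDiscr_conjTranspose_mul {s : Type*} [Fintype s] [StarRing R]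
    (U W : n → Matrix s n R) :
    mixedDiscr (fun k => (U k)ᴴ * W k) =
      ∑ r : n → s, star (of fun k l => U k (r k) l).det * (of fun k l => W k (r k) l).det := by
  have hexpand (π : Perm n) : (of fun k l => ((U k)ᴴ * W k) (π k) l).det =
      ∑ r : n → s, (∏ k, star (U k (r k) (π k))) * (of fun k l => W k (r k) l).det := by
    have hrows : (of fun k l => ((U k)ᴴ * W k) (π k) l) =
        of fun k => ∑ t, star (U k t (π k)) • W k t := by
      ext k l
      simp [mul_apply]
    rw [hrows]
    exact (detRowAlternating.toMultilinearMap.map_sum _).trans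
      (sum_congr rfl fun r _ => det_mul_column _ _)
  simp only [mixedDiscr_eq_sum_sign_mul_det, hexpand, mul_sum]
  rw [sum_comm]
  refine sum_congr rfl fun r _ => ?_
  rw [det_eq_sum_sign_mul_prod (of fun k l => U k (r k) l), star_sum, sum_mul]
  refine sum_congr rfl fun π _ => ?_
  simp [star_prod, mul_assoc]

end CommRing

section RCLike

variable {𝕜 ι : Type*} [RCLike 𝕜]

theorem posSemidef_mixedDiscr_conjTranspose_mul {n s : Type*} [Fintype ι] [Fintype n]
    [DecidableEq n] [Fintype s] (U : ι → n → Matrix s n 𝕜) :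
    (of fun i j => mixedDiscr fun k => (U i k)ᴴ * U j k).PosSemidef := by
  set G : Matrix (n → s) ι 𝕜 := of fun r i => (of fun k l => U i k (r k) l).det
  have hG : (of fun i j => mixedDiscr fun k => (U i k)ᴴ * U j k) = Gᴴ * G := by
    ext i j
    simp [mixedDiscr_conjTranspose_mul, mul_apply, G]
  exact hG ▸ posSemidef_conjTranspose_mul_self G

theorem PosSemidef.of_nsmul {D : Matrix ι ι 𝕜} {k : ℕ} (hk : k ≠ 0) (h : (k • D).PosSemidef) :
    D.PosSemidef := by
  have := h.smul (a := ((k : ℝ)⁻¹)) (by positivity)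
  rwa [← Nat.cast_smul_eq_nsmul ℝ, smul_smul, inv_mul_cancel₀ (by exact_mod_cast hk),
    one_smul] at this

end RCLike

end Matrix

theorem exists_blockMx_eq_conjTranspose_mul {m n : ℕ}
    {A : Fin m → Fin m → Matrix (Fin n) (Fin n) ℂ} (hA : (blockMx A).PosSemidef) :
    ∃ V : Fin m → Matrix (Fin m × Fin n) (Fin n) ℂ, ∀ i j, A i j = (V i)ᴴ * V j := by
  obtain ⟨W, hW⟩ : ∃ W : Matrix (Fin m × Fin n) (Fin m × Fin n) ℂ, blockMx A = Wᴴ * W := by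
    open scoped MatrixOrder in
    simpa [star_eq_conjTranspose] using CStarAlgebra.nonneg_iff_eq_star_mul_self.mp hA.nonneg
  refine ⟨fun i => W.submatrix id (i, ·), fun i j => ?_⟩
  ext k l
  simpa [blockMx, mul_apply] using congrFun (congrFun hW (i, k)) (j, l)

/-- The determinant is completely strongly superadditive over the cone of
positive semidefinite matrices. -/
theorem det_completely_strongly_superadditive {n m : ℕ}
    (A B C : Fin m → Fin m → Matrix (Fin n) (Fin n) ℂ)
    (hA : (blockMx A).PosSemidef) (hB : (blockMx B).PosSemidef)
    (hC : (blockMx C).PosSemidef) :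
    ((Matrix.of fun i j => (A i j + B i j + C i j).det) +
        (Matrix.of fun i j => (C i j).det) -
        (Matrix.of fun i j => (A i j + C i j).det) -
        (Matrix.of fun i j => (B i j + C i j).det)).PosSemidef := by
  obtain ⟨VA, hVA⟩ := exists_blockMx_eq_conjTranspose_mul hA
  obtain ⟨VB, hVB⟩ := exists_blockMx_eq_conjTranspose_mul hB
  obtain ⟨VC, hVC⟩ := exists_blockMx_eq_conjTranspose_mul hC
  set V := ![VA, VB, VC]
  set X : Fin m → Fin m → Fin 3 → Matrix (Fin n) (Fin n) ℂ := fun i j => ![A i j, B i j, C i j]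
  have hgram (t : Fin 3) (i j : Fin m) : X i j t = (V t i)ᴴ * V t j := by
    fin_cases t
    exacts [hVA i j, hVB i j, hVC i j]
  set p : (Fin n → Fin 3) → Prop := fun g => 0 ∈ Set.range g ∧ 1 ∈ Set.range g
  have hp (g : Fin n → Fin 3) (τ : Perm (Fin n)) : p (g ∘ τ) ↔ p g := by
    simp only [p, EquivLike.range_comp]
  have hsplit : (Matrix.of fun i j => (A i j + B i j + C i j).det) +
      (Matrix.of fun i j => (C i j).det) - (Matrix.of fun i j => (A i j + C i j).det) -
        (Matrix.of fun i j => (B i j + C i j).det) =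
      ∑ g with p g, of fun i j => (mixRows g (X i j)).det := by
    ext i j
    simp only [Matrix.sum_apply, Matrix.sub_apply, Matrix.add_apply, of_apply]
    exact det_add_add_add_det_sub_det_add_sub_det_add _ _ _
  have hsym (g : Fin n → Fin 3) :
      ∑ τ : Perm (Fin n), (of fun i j => (mixRows (g ∘ τ) (X i j)).det) =
        of fun i j => mixedDiscr fun k => (V (g k) i)ᴴ * V (g k) j := by
    ext i j
    simp only [Matrix.sum_apply, of_apply, mixedDiscr, ← hgram]
    rfl
  refine PosSemidef.of_nsmul (Fintype.card_pos (α := Perm (Fin n))).ne' ?_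
  rw [hsplit, ← sum_filter_sum_perm_comp p hp]
  exact posSemidef_sum _ fun g _ =>
    hsym g ▸ posSemidef_mixedDiscr_conjTranspose_mul fun i k => V (g k) i
end

section
/- Let A = [A_{i,j}], B = [B_{i,j}], C = [C_{i,j}] be m×m block matrices with n×n complex blocks, each positive semidefinite as mn×mn matrices. Then, in the Loewner order on m×m complex matrices, [per(A_{i,j} + B_{i,j} + C_{i,j})]_{i,j=1}^m + [per(C_{i,j})]_{i,j=1}^m ≥ [per(A_{i,j} + C_{i,j})]_{i,j=1}^m + [per(B_{i,j} + C_{i,j})]_{i,j=1}^m. That is, the permanent is completely strongly superadditive over the cone of positive semidefinite matrices. -/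
open Matrix
open scoped ComplexOrder

open Finset

/-- With `V b = Σ_g Y (g • b)` the matrix is `Σ_b (V b)^* Y b`. Since `s` and `V` are
`G`-invariant, replacing `Y b` by `Y (g • b)` does not change it, so averaging over `g` turns it
into the Gram matrix `|G|⁻¹ Σ_b (V b)^* V b`. -/
theorem posSemidef_of_sum_star_smul_mul {𝕜 G β ι : Type*} [RCLike 𝕜] [Group G] [Fintype G]
    [MulAction G β] [Fintype ι] (s : Finset β) (hs : ∀ g : G, ∀ b ∈ s, g • b ∈ s)
    (Y : β → ι → 𝕜) :
    (of fun i j => ∑ b ∈ s, ∑ g : G, star (Y (g • b) i) * Y b j).PosSemidef := by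
  set V : β → ι → 𝕜 := fun b i => ∑ g : G, Y (g • b) i
  have hV (g : G) (b : β) : V (g • b) = V b := funext fun i =>
    Fintype.sum_equiv (Equiv.mulRight g) _ _ fun g' => by simp [mul_smul]
  have hshift (g : G) (i j : ι) :
      ∑ b ∈ s, star (V b i) * Y (g • b) j = ∑ b ∈ s, star (V b i) * Y b j :=
    sum_equiv (MulAction.toPerm g) (fun b => ⟨hs g b, fun h => by simpa using hs g⁻¹ _ h⟩)
      fun b _ => by simp [hV]
  let N : Matrix s ι 𝕜 := of fun b i => V b i
  have hN : (Fintype.card G : 𝕜)⁻¹ • (Nᴴ * N) =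
      of fun i j => ∑ b ∈ s, ∑ g : G, star (Y (g • b) i) * Y b j := by
    ext i j
    have hgram : (Nᴴ * N) i j = Fintype.card G * ∑ b ∈ s, star (V b i) * Y b j := calc
      (Nᴴ * N) i j = ∑ b ∈ s, star (V b i) * ∑ g : G, Y (g • b) j := by
        rw [mul_apply]; exact sum_coe_sort s fun b => star (V b i) * V b j
      _ = ∑ g : G, ∑ b ∈ s, star (V b i) * Y b j := by
        simp_rw [mul_sum]; rw [sum_comm]; simp_rw [hshift]
      _ = Fintype.card G * ∑ b ∈ s, star (V b i) * Y b j := by simp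
    simp [hgram, V, star_sum, sum_mul]
  rw [← hN]
  exact (posSemidef_conjTranspose_mul_self N).smul (by positivity)

theorem Matrix.permanent_sum {R κ D : Type*} [CommSemiring R] [Fintype κ] [DecidableEq κ]
    (t : Finset D) (M : D → Matrix κ κ R) :
    (∑ d ∈ t, M d).permanent =
      ∑ h ∈ Fintype.piFinset fun _ : κ => t, ∑ σ : Equiv.Perm κ, ∏ p, M (h p) (σ p) p := by
  simp only [permanent, sum_apply, prod_univ_sum]
  exact sum_comm

theorem sum_piFinset_inclusion_exclusion {κ D M : Type*} [Fintype κ] [DecidableEq κ] [Fintype D]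
    [AddCommGroup M] (f : (κ → D) → M) (P Q : D → Prop) [DecidablePred P] [DecidablePred Q] :
    ∑ h, f h + ∑ h ∈ Fintype.piFinset fun _ => {d | ¬P d ∧ ¬Q d}, f h
        - ∑ h ∈ Fintype.piFinset fun _ => {d | ¬Q d}, f h
        - ∑ h ∈ Fintype.piFinset fun _ => {d | ¬P d}, f h
      = ∑ h with (∃ p, P (h p)) ∧ ∃ p, Q (h p), f h := by
  have hpi (c : D → Prop) [DecidablePred c] :
      Fintype.piFinset (fun _ : κ => {d | c d}) = ({h | ∀ p, c (h p)} : Finset (κ → D)) := by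
    ext; simp
  rw [hpi, hpi, hpi]
  simp only [sum_filter, ← sum_add_distrib, ← sum_sub_distrib]
  refine sum_congr rfl fun h _ => ?_
  simp only [forall_and, ← not_exists]
  by_cases hP : ∃ p, P (h p) <;> by_cases hQ : ∃ p, Q (h p) <;> simp [hP, hQ]

section PermanentGram

variable {ι κ D : Type*} [Fintype κ] [DecidableEq κ]

/-- Entry `(i, j)` is the permanent of the `(i, j)` block of `Σ_{d ∈ t} (φ d)^* (φ d)`, each
`φ d` being read as a vector indexed by `ι × κ`. -/
def permanentGram {R : Type*} [CommSemiring R] [StarRing R] (φ : D → ι → κ → R) (t : Finset D) :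
    Matrix ι ι R :=
  of fun i j => (∑ d ∈ t, vecMulVec (star (φ d i)) (φ d j)).permanent

theorem permanentGram_apply {R : Type*} [CommSemiring R] [StarRing R] (φ : D → ι → κ → R)
    (t : Finset D) (i j : ι) :
    permanentGram φ t i j = ∑ h ∈ Fintype.piFinset fun _ => t, ∑ σ : Equiv.Perm κ,
      ∏ p, star (φ (h p) i (σ p)) * φ (h p) j p := by
  simp [permanentGram, permanent_sum, vecMulVec_apply]

variable {𝕜 : Type*} [RCLike 𝕜] [Fintype ι]

theorem posSemidef_sum_perm_prod_star_mul (φ : D → ι → κ → 𝕜) (s : Finset (κ → D))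
    (hs : ∀ σ : Equiv.Perm κ, ∀ h ∈ s, h ∘ σ ∈ s) :
    (of fun i j => ∑ h ∈ s, ∑ σ : Equiv.Perm κ,
      ∏ p, star (φ (h p) i (σ p)) * φ (h p) j p).PosSemidef := by
  let _ : MulAction (Equiv.Perm κ) (κ → D) := arrowAction
  convert posSemidef_of_sum_star_smul_mul s (fun σ h => hs σ⁻¹ h) (fun h i => ∏ p, φ (h p) i p)
    using 1
  ext i j
  refine sum_congr rfl fun h _ => sum_congr rfl fun σ _ => ?_
  rw [prod_mul_distrib, ← star_prod, ← Equiv.prod_comp σ fun p => φ ((σ • h) p) i p]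
  change _ = star (∏ p, φ (h (σ⁻¹ (σ p))) i (σ p)) * _
  simp

theorem posSemidef_permanentGram_inclusion_exclusion [Fintype D] (φ : D → ι → κ → 𝕜)
    (P Q : D → Prop) [DecidablePred P] [DecidablePred Q] :
    (permanentGram φ univ + permanentGram φ {d | ¬P d ∧ ¬Q d} - permanentGram φ {d | ¬Q d}
      - permanentGram φ {d | ¬P d}).PosSemidef := by
  convert posSemidef_sum_perm_prod_star_mul φ {h | (∃ p, P (h p)) ∧ ∃ p, Q (h p)} ?_ using 1
  · ext i j
    simp only [Matrix.sub_apply, Matrix.add_apply, permanentGram_apply, Fintype.piFinset_univ,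
      of_apply]
    exact sum_piFinset_inclusion_exclusion _ P Q
  · intro σ h
    simp only [mem_filter, mem_univ, true_and, Function.comp_apply]
    rintro ⟨⟨p, hp⟩, ⟨q, hq⟩⟩
    exact ⟨⟨σ⁻¹ p, by simpa using hp⟩, ⟨σ⁻¹ q, by simpa using hq⟩⟩

end PermanentGram

theorem exists_eq_sum_vecMulVec_of_posSemidef_blockMx {m n : ℕ}
    {A : Fin m → Fin m → Matrix (Fin n) (Fin n) ℂ} (hA : (blockMx A).PosSemidef) :
    ∃ a : Fin m × Fin n → Fin m → Fin n → ℂ,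
      A = fun i j => ∑ r, vecMulVec (star (a r i)) (a r j) := by
  open scoped MatrixOrder in
  obtain ⟨U, hU⟩ := CStarAlgebra.nonneg_iff_eq_star_mul_self.mp hA.nonneg
  refine ⟨fun r i p => U r (i, p), funext₂ fun i j => ?_⟩
  ext p q
  simpa [blockMx, mul_apply, vecMulVec_apply, Matrix.sum_apply] using congr_fun₂ hU (i, p) (j, q)

/-- The permanent is completely strongly superadditive over the cone of
positive semidefinite matrices. -/
theorem permanent_completely_strongly_superadditive {n m : ℕ}
    (A B C : Fin m → Fin m → Matrix (Fin n) (Fin n) ℂ)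
    (hA : (blockMx A).PosSemidef) (hB : (blockMx B).PosSemidef)
    (hC : (blockMx C).PosSemidef) :
    ((Matrix.of fun i j => (A i j + B i j + C i j).permanent) +
        (Matrix.of fun i j => (C i j).permanent) -
        (Matrix.of fun i j => (A i j + C i j).permanent) -
        (Matrix.of fun i j => (B i j + C i j).permanent)).PosSemidef := by
  obtain ⟨a, rfl⟩ := exists_eq_sum_vecMulVec_of_posSemidef_blockMx hA
  obtain ⟨b, rfl⟩ := exists_eq_sum_vecMulVec_of_posSemidef_blockMx hB
  obtain ⟨c, rfl⟩ := exists_eq_sum_vecMulVec_of_posSemidef_blockMx hC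
  -- `convert` would stall on the two (definitionally equal) orders on `ℂ`.
  refine Eq.subst (motive := fun M : Matrix (Fin m) (Fin m) ℂ => M.PosSemidef) ?_
    (posSemidef_permanentGram_inclusion_exclusion
      (fun d : Fin 3 × (Fin m × Fin n) => ![a, b, c] d.1 d.2) (·.1 = 0) (·.1 = 1))
  ext i j
  simp [permanentGram, sum_filter, Fintype.sum_prod_type, Fin.sum_univ_three]
end

section
/- Let A, B, C be positive semidefinite n×n complex matrices. Then det(A + B + C) + det(C) ≥ det(A + C) + det(B + C), where all determinants are (nonnegative) real numbers. That is, the determinant is strongly superadditive over the cone of positive semidefinite matrices. -/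
/-!
Write every positive semidefinite matrix as a Gram sum `∑ p, vecMulVec (v p) (star (v p))`.
By multilinearity, the determinant of `∑ p ∈ T, vecMulVec (v p) (star (v p))` is a sum over all
row choices `g : n → T` of terms `gramTerm v g`, and the terms along an orbit of `g` under
permutations of `n` add up to `|det (v ∘ g)|² ≥ 0`. Hence any permutation-invariant set of row
choices contributes a nonnegative amount. By inclusion–exclusion, the defect
`det(T₁ ∪ T₂) + det(T₁ ∩ T₂) - det T₁ - det T₂` is the contribution of the row choices that
meet both `T₁ \ T₂` and `T₂ \ T₁`, a permutation-invariant set. So `K ↦ det (∑ k ∈ K, A k)` is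
supermodular on families of positive semidefinite matrices, and the theorem is the case
`K₁ = {A, C}`, `K₂ = {B, C}`.
-/

open Matrix
open scoped ComplexOrder

namespace Matrix

open Finset

section CommRing

variable {R ι n : Type*} [CommRing R] [StarRing R] [Fintype n] [DecidableEq n]

def gramTerm (v : ι → n → R) (g : n → ι) : R :=
  (∏ a, v (g a) a) * det (of fun a => star (v (g a)))

theorem det_sum_vecMulVec_eq_sum_gramTerm (v : ι → n → R) (T : Finset ι) :
    det (∑ p ∈ T, vecMulVec (v p) (star (v p))) =
      ∑ g ∈ Fintype.piFinset fun _ => T, gramTerm v g := by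
  have hrows : ∑ p ∈ T, vecMulVec (v p) (star (v p)) =
      of fun a => ∑ p ∈ T, v p a • star (v p) := by
    ext a b
    simp [Matrix.sum_apply, vecMulVec_apply]
  rw [hrows]
  refine (detRowAlternating.toMultilinearMap.map_sum_finset
    (fun a p => v p a • star (v p)) fun _ => T).trans ?_
  refine sum_congr rfl fun g _ => ?_
  rw [MultilinearMap.map_smul_univ, gramTerm, smul_eq_mul]
  rfl

theorem sum_perm_gramTerm (v : ι → n → R) (g : n → ι) :
    ∑ σ : Equiv.Perm n, gramTerm v (g ∘ σ) =
      det (of fun a => v (g a)) * star (det (of fun a => v (g a))) := by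
  set V : Matrix n n R := of fun a => v (g a)
  have hstar : det (of fun a => star (v (g a))) = star (det V) := by
    rw [← det_conjTranspose, ← det_transpose]
    rfl
  have hσ (σ : Equiv.Perm n) : gramTerm v (g ∘ σ) =
      ((Equiv.Perm.sign σ : ℤ) : R) * (∏ a, V (σ a) a) * det (of fun a => star (v (g a))) := by
    rw [gramTerm, show (of fun a => star (v ((g ∘ σ) a))) =
      (of fun a => star (v (g a))).submatrix σ id from rfl, det_permute]
    simp only [V, of_apply, Function.comp_apply]
    ring
  simp_rw [hσ, ← sum_mul, ← det_apply', hstar]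

end CommRing

variable {𝕜 ι n : Type*} [RCLike 𝕜] [Fintype n] [DecidableEq n]

theorem sum_gramTerm_nonneg (v : ι → n → 𝕜) {S : Finset (n → ι)}
    (hS : ∀ σ : Equiv.Perm n, ∀ g ∈ S, g ∘ σ ∈ S) : 0 ≤ ∑ g ∈ S, gramTerm v g := by
  have hinvariant (σ : Equiv.Perm n) :
      ∑ g ∈ S, gramTerm v (g ∘ σ) = ∑ g ∈ S, gramTerm v g :=
    sum_nbij' (· ∘ σ) (· ∘ σ.symm) (hS σ) (hS σ.symm)
      (fun g _ => by simp [Function.comp_assoc]) (fun g _ => by simp [Function.comp_assoc])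
      fun _ _ => rfl
  have hcard : (Fintype.card (Equiv.Perm n) : 𝕜) * ∑ g ∈ S, gramTerm v g =
      ∑ g ∈ S, det (of fun a => v (g a)) * star (det (of fun a => v (g a))) := by
    simp_rw [← sum_perm_gramTerm, ← nsmul_eq_mul, ← card_univ, ← sum_const, sum_comm (s := S),
      hinvariant]
  have hcard_ne : (Fintype.card (Equiv.Perm n) : 𝕜) ≠ 0 :=
    Nat.cast_ne_zero.mpr Fintype.card_ne_zero
  calc (0 : 𝕜) ≤ (Fintype.card (Equiv.Perm n) : 𝕜)⁻¹ *
        ∑ g ∈ S, det (of fun a => v (g a)) * star (det (of fun a => v (g a))) :=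
        mul_nonneg (by positivity) (sum_nonneg fun g _ => mul_star_self_nonneg _)
    _ = ∑ g ∈ S, gramTerm v g := by rw [← hcard, inv_mul_cancel_left₀ hcard_ne]

theorem det_sum_vecMulVec_supermodular [DecidableEq ι] (v : ι → n → 𝕜) (T₁ T₂ : Finset ι) :
    det (∑ p ∈ T₁, vecMulVec (v p) (star (v p))) + det (∑ p ∈ T₂, vecMulVec (v p) (star (v p))) ≤
      det (∑ p ∈ T₁ ∪ T₂, vecMulVec (v p) (star (v p))) +
        det (∑ p ∈ T₁ ∩ T₂, vecMulVec (v p) (star (v p))) := by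
  simp_rw [det_sum_vecMulVec_eq_sum_gramTerm, Fintype.piFinset_inter]
  rw [← sum_union_inter]
  set P := Fintype.piFinset fun _ : n => T₁ ∪ T₂
  set P₁ := Fintype.piFinset fun _ : n => T₁
  set P₂ := Fintype.piFinset fun _ : n => T₂
  have hsub : P₁ ∪ P₂ ⊆ P := union_subset (Fintype.piFinset_subset _ _ fun _ => subset_union_left)
    (Fintype.piFinset_subset _ _ fun _ => subset_union_right)
  have hperm (T : Finset ι) (σ : Equiv.Perm n) (g : n → ι) :
      g ∘ σ ∈ Fintype.piFinset (fun _ => T) ↔ g ∈ Fintype.piFinset (fun _ => T) := by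
    simpa only [Fintype.mem_piFinset, Function.comp_apply]
      using σ.forall_congr_right (q := fun a => g a ∈ T)
  rw [← sum_sdiff hsub]
  refine add_le_add_left (le_add_of_nonneg_left (sum_gramTerm_nonneg v fun σ g hg => ?_)) _
  simpa only [P, P₁, P₂, mem_sdiff, mem_union, hperm] using hg

theorem det_sum_supermodular_of_posSemidef {κ : Type*} [DecidableEq κ] (A : κ → Matrix n n 𝕜)
    (hA : ∀ k, (A k).PosSemidef) (K₁ K₂ : Finset κ) :
    det (∑ k ∈ K₁, A k) + det (∑ k ∈ K₂, A k) ≤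
      det (∑ k ∈ K₁ ∪ K₂, A k) + det (∑ k ∈ K₁ ∩ K₂, A k) := by
  choose m v hv using fun k => posSemidef_iff_eq_sum_vecMulVec.mp (hA k)
  let w : (Σ k, Fin (m k)) → n → 𝕜 := fun p => v p.1 p.2
  have hgram (K : Finset κ) :
      ∑ k ∈ K, A k = ∑ p ∈ K.sigma fun _ => univ, vecMulVec (w p) (star (w p)) := by
    simp only [sum_sigma, hv, w]
  have hunion : (K₁ ∪ K₂).sigma (fun k => (univ : Finset (Fin (m k)))) =
      K₁.sigma (fun _ => univ) ∪ K₂.sigma (fun _ => univ) := by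
    ext
    simp
  have hinter : (K₁ ∩ K₂).sigma (fun k => (univ : Finset (Fin (m k)))) =
      K₁.sigma (fun _ => univ) ∩ K₂.sigma (fun _ => univ) := by
    ext
    simp
  simp only [hgram, hunion, hinter]
  exact det_sum_vecMulVec_supermodular w _ _

end Matrix

/-- The determinant is strongly superadditive over the cone of positive
semidefinite matrices. -/
theorem det_strongly_superadditive {n : ℕ} (A B C : Matrix (Fin n) (Fin n) ℂ)
    (hA : A.PosSemidef) (hB : B.PosSemidef) (hC : C.PosSemidef) :
    (A + C).det + (B + C).det ≤ (A + B + C).det + C.det := by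
  have h := det_sum_supermodular_of_posSemidef ![A, B, C]
    (fun k => by fin_cases k <;> assumption) {0, 2} {1, 2}
  have hunion : ({0, 2} ∪ {1, 2} : Finset (Fin 3)) = Finset.univ := by decide
  have hinter : ({0, 2} ∩ {1, 2} : Finset (Fin 3)) = {2} := by decide
  simpa [hunion, hinter, Fin.sum_univ_three] using h
end

section
/- Let G be a subgroup of the symmetric group S_n and let χ : G → ℂ be a character of degree 1 (a group homomorphism into the complex numbers whose values have modulus one). Let A, B, C be positive semidefinite n×n complex matrices. Then d_χ^G(A + B + C) + d_χ^G(C) ≥ d_χ^G(A + C) + d_χ^G(B + C), where all four quantities are (nonnegative) real numbers. -/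
open Matrix
open scoped ComplexOrder

/-!
Write every positive semidefinite `P` as `Nᴴ * N`. Then `d_χ^G(Nᴴ * N) = ⟪v, T v⟫`, where
`v f = ∏ᵢ N (f i) i` is the tensor product of the columns of `N` and `T = ∑_σ χ(σ) P_σ` is the
twisted symmetrizer on the tensor power; `T * T = |G| • T = Tᴴ * T`, so `T` is positive
semidefinite. Stacking the factors of `A`, `B`, `C` into one matrix, each of the four matrices
in the inequality is `d_χ^G` of the stack with some blocks of rows deleted, i.e. the quadratic
form of `T` at the restriction of one tensor `v` to a set of multi-indices. These sets are
`G`-invariant, so `T` commutes with the restrictions and `S ↦ ⟪v|_S, T v|_S⟫` is a nonnegative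
additive function on `G`-invariant sets; inclusion–exclusion then gives supermodularity.
-/

theorem MonoidHom.map_inv_eq_conj_of_norm_eq_one {G : Type*} [Group G] (χ : G →* ℂ)
    (hχ : ∀ g, ‖χ g‖ = 1) (g : G) : χ g⁻¹ = star (χ g) := by
  rw [map_inv, Complex.inv_eq_conj (hχ g)]
  rfl

section TwistedSymmetrizer

variable {G α : Type*} [Group G] [Fintype G] [DecidableEq α]
  (ρ : G →* Equiv.Perm α) (χ : G →* ℂ)

noncomputable def twistedSymmetrizer : Matrix α α ℂ :=
  ∑ g, χ g • (ρ g).permMatrix ℂ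

theorem twistedSymmetrizer_mulVec_apply [Fintype α] (w : α → ℂ) (x : α) :
    (twistedSymmetrizer ρ χ *ᵥ w) x = ∑ g, χ g * w (ρ g x) := by
  simp [twistedSymmetrizer, sum_mulVec, smul_mulVec, permMatrix_mulVec]

theorem twistedSymmetrizer_mul_self [Fintype α] :
    twistedSymmetrizer ρ χ * twistedSymmetrizer ρ χ
      = (Fintype.card G : ℂ) • twistedSymmetrizer ρ χ := by
  have hmul : ∀ g h : G, (χ g • (ρ g).permMatrix ℂ) * (χ h • (ρ h).permMatrix ℂ)
      = χ (h * g) • (ρ (h * g)).permMatrix ℂ := fun g h => by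
    rw [smul_mul_smul_comm, ← permMatrix_mul, map_mul, map_mul, mul_comm (χ h)]
  calc twistedSymmetrizer ρ χ * twistedSymmetrizer ρ χ
      = ∑ g, ∑ h : G, χ (h * g) • (ρ (h * g)).permMatrix ℂ := by
        simp only [twistedSymmetrizer, Finset.sum_mul_sum, hmul]
    _ = ∑ _g : G, twistedSymmetrizer ρ χ :=
        Finset.sum_congr rfl fun g _ => Fintype.sum_equiv (Equiv.mulRight g) _ _ fun _ => rfl
    _ = (Fintype.card G : ℂ) • twistedSymmetrizer ρ χ := by
        rw [Finset.sum_const, Finset.card_univ, ← Nat.cast_smul_eq_nsmul ℂ]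

theorem conjTranspose_twistedSymmetrizer (hχ : ∀ g, ‖χ g‖ = 1) :
    (twistedSymmetrizer ρ χ)ᴴ = twistedSymmetrizer ρ χ := by
  simp only [twistedSymmetrizer, conjTranspose_sum, conjTranspose_smul, conjTranspose_permMatrix,
    ← χ.map_inv_eq_conj_of_norm_eq_one hχ, ← map_inv]
  exact Equiv.sum_comp (Equiv.inv G) (fun g => χ g • (ρ g).permMatrix ℂ)

theorem posSemidef_twistedSymmetrizer [Fintype α] (hχ : ∀ g, ‖χ g‖ = 1) :
    (twistedSymmetrizer ρ χ).PosSemidef := by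
  have hcard : (Fintype.card G : ℂ) ≠ 0 := by exact_mod_cast Fintype.card_ne_zero
  have h : twistedSymmetrizer ρ χ
      = (Fintype.card G : ℂ)⁻¹ • ((twistedSymmetrizer ρ χ)ᴴ * twistedSymmetrizer ρ χ) := by
    rw [conjTranspose_twistedSymmetrizer ρ χ hχ, twistedSymmetrizer_mul_self, smul_smul,
      inv_mul_cancel₀ hcard, one_smul]
  rw [h]
  exact (posSemidef_conjTranspose_mul_self _).smul (by positivity)

theorem twistedSymmetrizer_mulVec_indicator [Fintype α] {S : Set α}
    (hS : ∀ g x, ρ g x ∈ S ↔ x ∈ S) (w : α → ℂ) :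
    twistedSymmetrizer ρ χ *ᵥ S.indicator w = S.indicator (twistedSymmetrizer ρ χ *ᵥ w) := by
  ext x
  by_cases hx : x ∈ S <;> simp [twistedSymmetrizer_mulVec_apply, Set.indicator, hS, hx]

end TwistedSymmetrizer

section IndicatorQuadForm

variable {α R : Type*} [Fintype α] [CommRing R] [StarRing R]
  (M : Matrix α α R) (v : α → R)

noncomputable def indicatorQuadForm (S : Set α) : R :=
  star (S.indicator v) ⬝ᵥ (M *ᵥ S.indicator v)

variable {M}

theorem indicatorQuadForm_nonneg [PartialOrder R] (hM : M.PosSemidef) (S : Set α) :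
    0 ≤ indicatorQuadForm M v S :=
  hM.dotProduct_mulVec_nonneg _

theorem indicatorQuadForm_eq_inter_add_diff {S : Set α}
    (hS : ∀ w, M *ᵥ S.indicator w = S.indicator (M *ᵥ w)) (X : Set α) :
    indicatorQuadForm M v X = indicatorQuadForm M v (X ∩ S) + indicatorQuadForm M v (X \ S) := by
  have hSc : ∀ w, M *ᵥ Sᶜ.indicator w = Sᶜ.indicator (M *ᵥ w) := fun w => by
    rw [Set.indicator_compl, Set.indicator_compl, mulVec_sub, hS]
  have hin : (X ∩ S).indicator v = S.indicator (X.indicator v) := by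
    rw [Set.indicator_indicator, Set.inter_comm]
  have hdiff : (X \ S).indicator v = Sᶜ.indicator (X.indicator v) := by
    rw [Set.indicator_indicator, Set.sdiff_eq, Set.inter_comm]
  rw [indicatorQuadForm, indicatorQuadForm, indicatorQuadForm, hin, hdiff, hS, hSc]
  simp only [dotProduct, ← Finset.sum_add_distrib]
  refine Finset.sum_congr rfl fun x _ => ?_
  by_cases hx : x ∈ S <;> simp [hx]

theorem indicatorQuadForm_add_le [PartialOrder R] [IsOrderedAddMonoid R] (hM : M.PosSemidef) {S T U : Set α}
    (hS : ∀ w, M *ᵥ S.indicator w = S.indicator (M *ᵥ w))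
    (hT : ∀ w, M *ᵥ T.indicator w = T.indicator (M *ᵥ w)) (hU : S ∪ T ⊆ U) :
    indicatorQuadForm M v S + indicatorQuadForm M v T
      ≤ indicatorQuadForm M v U + indicatorQuadForm M v (S ∩ T) := by
  have hUS : U ∩ S = S := Set.inter_eq_right.mpr (Set.subset_union_left.trans hU)
  have hUST : U \ S ∩ T = T \ S := by
    ext x
    have := @hU x
    simp only [Set.mem_union, Set.mem_inter_iff, Set.mem_sdiff] at *
    tauto
  have hU_split := indicatorQuadForm_eq_inter_add_diff v hS U
  have hUS_split := indicatorQuadForm_eq_inter_add_diff v hT (U \ S)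
  have hT_split := indicatorQuadForm_eq_inter_add_diff v hS T
  rw [hUS] at hU_split
  rw [hUST] at hUS_split
  rw [Set.inter_comm] at hT_split
  rw [← sub_nonneg, hU_split, hUS_split, hT_split]
  convert indicatorQuadForm_nonneg v hM ((U \ S) \ T) using 1
  ring

end IndicatorQuadForm

def Equiv.Perm.arrowCongrHom (ι κ : Type*) : Equiv.Perm ι →* Equiv.Perm (ι → κ) where
  toFun σ := σ.arrowCongr (Equiv.refl κ)
  map_one' := rfl
  map_mul' _ _ := rfl

theorem Equiv.Perm.arrowCongrHom_apply_apply {ι κ : Type*} (σ : Equiv.Perm ι) (f : ι → κ) :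
    arrowCongrHom ι κ σ f = f ∘ ⇑σ⁻¹ :=
  rfl

def Matrix.colTensor {ι κ R : Type*} [Fintype ι] [CommMonoid R] (M : Matrix κ ι R)
    (f : ι → κ) : R :=
  ∏ i, M (f i) i

def Matrix.stackRows {ι m p R : Type*} (N : ι → Matrix m p R) : Matrix (ι × m) p R :=
  of fun x j => N x.1 x.2 j

theorem Matrix.conjTranspose_stackRows_mul_self {ι m p R : Type*} [Fintype ι] [Fintype m]
    [NonUnitalSemiring R] [StarRing R] (N : ι → Matrix m p R) :
    (stackRows N)ᴴ * stackRows N = ∑ t, (N t)ᴴ * N t := by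
  ext i j
  simp [stackRows, mul_apply, Fintype.sum_prod_type, Matrix.sum_apply]

theorem Matrix.colTensor_stackRows_indicator {ι m p R : Type*} [Fintype p]
    [CommMonoidWithZero R] (N : ι → Matrix m p R) (S : Set ι) :
    colTensor (stackRows (S.indicator N))
      = (Set.univ.pi fun _ => Prod.fst ⁻¹' S).indicator (colTensor (stackRows N)) := by
  ext f
  by_cases h : ∀ i, (f i).1 ∈ S
  · simp [colTensor, stackRows, Set.indicator, h]
  · obtain ⟨i, hi⟩ := not_forall.mp h
    rw [Set.indicator_of_notMem (by simpa using ⟨i, hi⟩)]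
    exact Finset.prod_eq_zero (Finset.mem_univ i) (by simp [stackRows, hi])

theorem Matrix.PosSemidef.exists_eq_conjTranspose_mul_self {m 𝕜 : Type*} [Fintype m]
    [DecidableEq m] [RCLike 𝕜] {A : Matrix m m 𝕜} (hA : A.PosSemidef) :
    ∃ B : Matrix m m 𝕜, A = Bᴴ * B := by
  open scoped MatrixOrder in exact CStarAlgebra.nonneg_iff_eq_star_mul_self.mp hA.nonneg

section GeneralizedMatrixFunction

variable {n : ℕ} (G : Subgroup (Equiv.Perm (Fin n))) (χ : G →* ℂ)

open scoped Classical in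
theorem gmf_conjTranspose_mul_self {κ : Type*} [Fintype κ] [DecidableEq κ]
    (M : Matrix κ (Fin n) ℂ) :
    gmf G χ (Mᴴ * M) = star M.colTensor ⬝ᵥ
      (twistedSymmetrizer ((Equiv.Perm.arrowCongrHom (Fin n) κ).comp G.subtype) χ *ᵥ
        M.colTensor) := by
  have hσ : ∀ σ : Equiv.Perm (Fin n), ∏ i, (Mᴴ * M) i (σ i)
      = ∑ f : Fin n → κ, star (M.colTensor f) * M.colTensor (f ∘ ⇑σ⁻¹) := by
    intro σ
    simp only [mul_apply, conjTranspose_apply, Fintype.prod_sum, colTensor, star_prod]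
    refine Finset.sum_congr rfl fun f _ => ?_
    rw [Finset.prod_mul_distrib]
    congr 1
    exact Fintype.prod_equiv σ _ _ fun i => by simp
  simp only [gmf, hσ, dotProduct, twistedSymmetrizer_mulVec_apply, Finset.mul_sum]
  rw [Finset.sum_comm]
  refine Finset.sum_congr rfl fun σ _ => Finset.sum_congr rfl fun f _ => ?_
  simp only [MonoidHom.comp_apply, Subgroup.coe_subtype, Equiv.Perm.arrowCongrHom_apply_apply,
    Pi.star_apply]
  ring

theorem twistedSymmetrizer_mulVec_indicator_pi [Fintype G] {κ : Type*} [Fintype κ]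
    [DecidableEq κ] (R : Set κ) (w : (Fin n → κ) → ℂ) :
    twistedSymmetrizer ((Equiv.Perm.arrowCongrHom (Fin n) κ).comp G.subtype) χ *ᵥ
        (Set.univ.pi fun _ => R).indicator w
      = (Set.univ.pi fun _ => R).indicator
          (twistedSymmetrizer ((Equiv.Perm.arrowCongrHom (Fin n) κ).comp G.subtype) χ *ᵥ w) := by
  refine twistedSymmetrizer_mulVec_indicator _ χ (fun σ f => ?_) w
  simp only [MonoidHom.comp_apply, Subgroup.coe_subtype, Equiv.Perm.arrowCongrHom_apply_apply,
    Set.mem_univ_pi, Function.comp_apply]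
  exact (σ : Equiv.Perm (Fin n))⁻¹.forall_congr_right (q := fun i => f i ∈ R)

open scoped Classical in
theorem gmf_sum_eq_indicatorQuadForm {ι : Type*} [Fintype ι] [DecidableEq ι]
    (N : ι → Matrix (Fin n) (Fin n) ℂ) (S : Finset ι) :
    gmf G χ (∑ t ∈ S, (N t)ᴴ * N t)
      = indicatorQuadForm
          (twistedSymmetrizer ((Equiv.Perm.arrowCongrHom (Fin n) (ι × Fin n)).comp G.subtype) χ)
          (colTensor (stackRows N)) (Set.univ.pi fun _ => Prod.fst ⁻¹' (S : Set ι)) := by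
  have hsum : ∑ t ∈ S, (N t)ᴴ * N t
      = (stackRows ((S : Set ι).indicator N))ᴴ * stackRows ((S : Set ι).indicator N) := by
    rw [conjTranspose_stackRows_mul_self, ← Finset.sum_indicator_subset _ (Finset.subset_univ S)]
    refine Finset.sum_congr rfl fun t _ => ?_
    by_cases ht : t ∈ S <;> simp [ht]
  rw [hsum, gmf_conjTranspose_mul_self, colTensor_stackRows_indicator]
  rfl

theorem gmf_sum_supermodular (hχ : ∀ g, ‖χ g‖ = 1) {ι : Type*} [Fintype ι] [DecidableEq ι]
    (P : ι → Matrix (Fin n) (Fin n) ℂ) (hP : ∀ t, (P t).PosSemidef) (S₁ S₂ : Finset ι) :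
    gmf G χ (∑ t ∈ S₁, P t) + gmf G χ (∑ t ∈ S₂, P t)
      ≤ gmf G χ (∑ t ∈ S₁ ∪ S₂, P t) + gmf G χ (∑ t ∈ S₁ ∩ S₂, P t) := by
  classical
  choose N hN using fun t => (hP t).exists_eq_conjTranspose_mul_self
  simp only [hN, gmf_sum_eq_indicatorQuadForm]
  rw [Finset.coe_inter, Set.preimage_inter, Set.pi_inter_distrib]
  refine indicatorQuadForm_add_le _ (posSemidef_twistedSymmetrizer _ χ hχ)
    (twistedSymmetrizer_mulVec_indicator_pi G χ _) (twistedSymmetrizer_mulVec_indicator_pi G χ _)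
    (Set.union_subset ?_ ?_) <;>
  exact Set.pi_mono fun _ _ => Set.preimage_mono (by simp)

end GeneralizedMatrixFunction

/-- Generalized matrix functions are strongly superadditive over the cone of
positive semidefinite matrices. -/
theorem gmf_strongly_superadditive {n : ℕ}
    (G : Subgroup (Equiv.Perm (Fin n))) (χ : G →* ℂ)
    (hχ : ∀ g : G, ‖χ g‖ = 1)
    (A B C : Matrix (Fin n) (Fin n) ℂ)
    (hA : A.PosSemidef) (hB : B.PosSemidef) (hC : C.PosSemidef) :
    gmf G χ (A + C) + gmf G χ (B + C) ≤ gmf G χ (A + B + C) + gmf G χ C := by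
  have h := gmf_sum_supermodular G χ hχ ![A, B, C]
    (by simp [Fin.forall_fin_succ, hA, hB, hC]) {0, 2} {1, 2}
  convert h using 3 <;> simp
  abel
end

section
/- Let A, B, C be positive semidefinite n×n complex matrices. Then per(A + B + C) + per(C) ≥ per(A + C) + per(B + C), where all four permanents are (nonnegative) real numbers. That is, the permanent is strongly superadditive over the cone of positive semidefinite matrices. -/
open Matrix Finset
open scoped ComplexOrder

/-!
Write `A = a aᴴ`, `B = b bᴴ`, `C = c cᴴ` and let `W = [a b c]`, so that `A + B + C = W Wᴴ`.
For any `W`, `n! · per (W Wᴴ) = ∑ₓ |per W[:, x]|²`, the sum running over all sequences `x`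
of `n` columns of `W` (a Cauchy–Binet formula for permanents). Replacing the block `b`, the
block `a`, or both by zero gives the same formula for `A + C`, `B + C` and `C`, with the sum
restricted to the `x` avoiding those blocks. By inclusion–exclusion,
`n! · (per (A + B + C) + per C - per (A + C) - per (B + C))` is the sum of `|per W[:, x]|²`
over the `x` meeting both the block `a` and the block `b`, hence nonnegative.
-/

theorem Finset.sum_add_sum_le_sum_add_sum_inter {α M : Type*} [DecidableEq α]
    [AddCommMonoid M] [PartialOrder M] [IsOrderedAddMonoid M] {s t u : Finset α} {f : α → M}
    (hs : s ⊆ u) (ht : t ⊆ u) (hf : ∀ i ∈ u, 0 ≤ f i) :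
    ∑ i ∈ s, f i + ∑ i ∈ t, f i ≤ ∑ i ∈ u, f i + ∑ i ∈ s ∩ t, f i := by
  rw [← sum_union_inter]
  gcongr
  · exact fun i hi _ => hf i hi
  · exact union_subset hs ht

namespace Matrix

theorem permanent_eq_zero_of_column_eq_zero {n R : Type*} [Fintype n] [DecidableEq n]
    [CommSemiring R] {M : Matrix n n R} (j : n) (h : ∀ i, M i j = 0) : M.permanent = 0 :=
  sum_eq_zero fun σ _ => prod_eq_zero (mem_univ j) (h (σ j))

theorem PosSemidef.exists_eq_mul_conjTranspose {n 𝕜 : Type*} [Fintype n] [DecidableEq n]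
    [RCLike 𝕜] {A : Matrix n n 𝕜} (hA : A.PosSemidef) :
    ∃ B : Matrix n n 𝕜, A = B * Bᴴ := by
  open scoped MatrixOrder Matrix.Norms.L2Operator in
  exact CStarAlgebra.nonneg_iff_eq_mul_star_self.mp hA.nonneg

variable {ι m n R : Type*} [CommSemiring R] [StarRing R] [Fintype m]

def blockCols (V : ι → Matrix n m R) : Matrix n (ι × m) R :=
  of fun i p => V p.1 i p.2

theorem blockCols_mul_conjTranspose [Fintype ι] (V : ι → Matrix n m R) :
    blockCols V * (blockCols V)ᴴ = ∑ k, V k * (V k)ᴴ := by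
  ext i j
  simp [blockCols, mul_apply, Matrix.sum_apply, Fintype.sum_prod_type]

variable [Fintype n] [DecidableEq n]

theorem card_perm_mul_permanent_mul_conjTranspose (W : Matrix n m R) :
    (Fintype.card (Equiv.Perm n) : R) * (W * Wᴴ).permanent =
      ∑ x : n → m, star (W.submatrix id x).permanent * (W.submatrix id x).permanent := by
  have hpair (σ τ : Equiv.Perm n) : ∏ i, ((W * Wᴴ).submatrix id σ) (τ i) i =
      ∑ x : n → m, ∏ i, star (W (σ i) (x i)) * W (τ i) (x i) := by
    simp only [submatrix_apply, id, mul_apply, conjTranspose_apply, mul_comm (W _ _)]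
    exact Fintype.prod_sum fun i r => star (W (σ i) r) * W (τ i) r
  calc (Fintype.card (Equiv.Perm n) : R) * (W * Wᴴ).permanent
      = ∑ σ : Equiv.Perm n, ∑ τ : Equiv.Perm n,
          ∏ i, ((W * Wᴴ).submatrix id σ) (τ i) i := by
        simp only [← permanent.eq_def, permanent_permute_rows, sum_const, card_univ,
          nsmul_eq_mul]
    _ = ∑ x : n → m, ∑ σ : Equiv.Perm n, ∑ τ : Equiv.Perm n,
          ∏ i, star (W (σ i) (x i)) * W (τ i) (x i) := by
        simpa only [hpair] using sum_comm_cycle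
    _ = ∑ x : n → m, star (W.submatrix id x).permanent * (W.submatrix id x).permanent := by
        simp only [permanent, submatrix_apply, id, star_sum, star_prod, sum_mul_sum,
          prod_mul_distrib]

theorem card_perm_mul_permanent_sum_filter_mul_conjTranspose [Fintype ι]
    (V : ι → Matrix n m R) (p : ι → Prop) [DecidablePred p] :
    (Fintype.card (Equiv.Perm n) : R) * (∑ k ∈ univ.filter p, V k * (V k)ᴴ).permanent =
      ∑ x ∈ univ.filter fun x : n → ι × m => ∀ i, p (x i).1,
        star ((blockCols V).submatrix id x).permanent *
          ((blockCols V).submatrix id x).permanent := by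
  set V' : ι → Matrix n m R := fun k => if p k then V k else 0
  have hV' : ∑ k ∈ univ.filter p, V k * (V k)ᴴ = blockCols V' * (blockCols V')ᴴ := by
    rw [blockCols_mul_conjTranspose, sum_filter]
    refine sum_congr rfl fun k _ => ?_
    by_cases hk : p k <;> simp [V', hk]
  rw [hV', card_perm_mul_permanent_mul_conjTranspose, sum_filter]
  refine sum_congr rfl fun x _ => ?_
  by_cases hx : ∀ i, p (x i).1
  · have hsub : (blockCols V').submatrix id x = (blockCols V).submatrix id x := by
      ext i j
      simp [blockCols, V', hx j]
    rw [if_pos hx, hsub]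
  · obtain ⟨j, hj⟩ := not_forall.mp hx
    rw [if_neg hx, permanent_eq_zero_of_column_eq_zero j fun i => by simp [blockCols, V', hj],
      mul_zero]

end Matrix

/-- The permanent is strongly superadditive over the cone of positive
semidefinite matrices. -/
theorem permanent_strongly_superadditive {n : ℕ} (A B C : Matrix (Fin n) (Fin n) ℂ)
    (hA : A.PosSemidef) (hB : B.PosSemidef) (hC : C.PosSemidef) :
    (A + C).permanent + (B + C).permanent ≤ (A + B + C).permanent + C.permanent := by
  obtain ⟨a, rfl⟩ := hA.exists_eq_mul_conjTranspose
  obtain ⟨b, rfl⟩ := hB.exists_eq_mul_conjTranspose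
  obtain ⟨c, rfl⟩ := hC.exists_eq_mul_conjTranspose
  set V := ![a, b, c]
  have hABC : ∑ k, V k * (V k)ᴴ = a * aᴴ + b * bᴴ + c * cᴴ := by
    simp [Fin.sum_univ_three, V]
  have hAC : ∑ k ∈ univ.filter (· ≠ 1), V k * (V k)ᴴ = a * aᴴ + c * cᴴ := by
    simp [sum_filter, Fin.sum_univ_three, V]
  have hBC : ∑ k ∈ univ.filter (· ≠ 0), V k * (V k)ᴴ = b * bᴴ + c * cᴴ := by
    simp [sum_filter, Fin.sum_univ_three, V]
  have hC' : ∑ k ∈ univ.filter (fun k => k ≠ 1 ∧ k ≠ 0), V k * (V k)ᴴ = c * cᴴ := by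
    simp [sum_filter, Fin.sum_univ_three, V]
  refine le_of_mul_le_mul_left ?_ (by positivity : (0 : ℂ) < Fintype.card (Equiv.Perm (Fin n)))
  rw [mul_add, mul_add, ← hABC, ← hAC, ← hBC, ← hC', ← blockCols_mul_conjTranspose,
    card_perm_mul_permanent_mul_conjTranspose,
    card_perm_mul_permanent_sum_filter_mul_conjTranspose,
    card_perm_mul_permanent_sum_filter_mul_conjTranspose,
    card_perm_mul_permanent_sum_filter_mul_conjTranspose]
  convert sum_add_sum_le_sum_add_sum_inter (subset_univ _) (subset_univ _)
    fun x _ => star_mul_self_nonneg ((blockCols V).submatrix id x).permanent using 3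
  ext x
  simp [forall_and]
end

section
/- Let A, B, C be positive semidefinite ℓ×ℓ complex matrices and let k be a positive integer. Then, in the Loewner order, ⊗^k(A + B + C) + ⊗^k C ≥ ⊗^k(A + C) + ⊗^k(B + C), where ⊗^k X denotes the k-fold Kronecker (tensor) power of X. -/
/-!
Expanding `⊗^k (∑ j ∈ S, P j)` multilinearly writes it as the sum, over all words `f : Fin k → S`,
of the mixed Kronecker products `⊗ᵢ P (f i)`, each positive semidefinite when every `P j` is
(a mixed product of Gram matrices `Sᴴ S` is the Gram matrix of the mixed product of the `S`).
The words over `S ∩ T` are exactly those that are words over both `S` and `T`, so by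
inclusion–exclusion `⊗^k(∑_{S ∪ T}) + ⊗^k(∑_{S ∩ T}) - ⊗^k(∑_S) - ⊗^k(∑_T)` is the sum over the
words over `S ∪ T` that are words over neither `S` nor `T`, hence positive semidefinite.
The theorem is the case `P = (A, B, C)`, `S = {A, C}`, `T = {B, C}`.
-/

open Matrix
open scoped ComplexOrder

/-- The k-fold Kronecker (tensor) power of an ℓ×ℓ matrix, with rows and columns
indexed by k-tuples of indices: the ((a₁,…,a_k),(b₁,…,b_k)) entry is ∏ᵢ X (aᵢ) (bᵢ). -/
def tensorPow {l : ℕ} (k : ℕ) (X : Matrix (Fin l) (Fin l) ℂ) :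
    Matrix (Fin k → Fin l) (Fin k → Fin l) ℂ :=
  Matrix.of fun a b => ∏ i, X (a i) (b i)

namespace Matrix

variable {ι l m n R : Type*} [Fintype ι]

def piKronecker [CommMonoid R] (M : ι → Matrix m n R) : Matrix (ι → m) (ι → n) R :=
  of fun a b => ∏ i, M i (a i) (b i)

theorem piKronecker_mul [CommSemiring R] [DecidableEq ι] [Fintype m]
    (M : ι → Matrix l m R) (N : ι → Matrix m n R) :
    piKronecker (fun i => M i * N i) = piKronecker M * piKronecker N := by
  ext a b
  simp only [piKronecker, mul_apply, of_apply, Finset.prod_univ_sum, Fintype.piFinset_univ,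
    Finset.prod_mul_distrib]

theorem conjTranspose_piKronecker [CommSemiring R] [StarRing R] (M : ι → Matrix m n R) :
    (piKronecker M)ᴴ = piKronecker fun i => (M i)ᴴ := by
  ext a b
  simp [piKronecker, star_prod]

theorem piKronecker_sum [CommSemiring R] [DecidableEq ι] {κ : Type*} (s : ι → Finset κ)
    (P : ι → κ → Matrix m n R) :
    piKronecker (fun i => ∑ j ∈ s i, P i j) =
      ∑ f ∈ Fintype.piFinset s, piKronecker fun i => P i (f i) := by
  ext a b
  simp only [piKronecker, of_apply, sum_apply, Finset.prod_univ_sum]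

open scoped MatrixOrder in
theorem PosSemidef.piKronecker {𝕜 : Type*} [RCLike 𝕜] [Fintype n]
    {M : ι → Matrix n n 𝕜} (hM : ∀ i, (M i).PosSemidef) :
    (piKronecker M).PosSemidef := by
  classical
  choose S hS using fun i => CStarAlgebra.nonneg_iff_eq_star_mul_self.mp (hM i).nonneg
  rw [show M = fun i => star (S i) * S i from funext hS]
  simpa only [star_eq_conjTranspose, piKronecker_mul, conjTranspose_piKronecker] using
    posSemidef_conjTranspose_mul_self (Matrix.piKronecker S)

theorem posSemidef_piKronecker_sum_union_add_inter_sub_sub {𝕜 κ : Type*} [RCLike 𝕜]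
    [Fintype n] [DecidableEq κ]
    {P : κ → Matrix n n 𝕜} (hP : ∀ j, (P j).PosSemidef) (s t : Finset κ) :
    (piKronecker (fun _ : ι => ∑ j ∈ s ∪ t, P j) + piKronecker (fun _ => ∑ j ∈ s ∩ t, P j) -
      piKronecker (fun _ => ∑ j ∈ s, P j) - piKronecker (fun _ => ∑ j ∈ t, P j)).PosSemidef := by
  classical
  set S := Fintype.piFinset fun _ : ι => s
  set T := Fintype.piFinset fun _ : ι => t
  set U := Fintype.piFinset fun _ : ι => s ∪ t
  have hST : S ∪ T ⊆ U := Finset.union_subset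
    (Fintype.piFinset_subset _ _ fun _ => Finset.subset_union_left)
    (Fintype.piFinset_subset _ _ fun _ => Finset.subset_union_right)
  have hsplit : piKronecker (fun _ : ι => ∑ j ∈ s ∪ t, P j) +
      piKronecker (fun _ => ∑ j ∈ s ∩ t, P j) =
      ∑ f ∈ U \ (S ∪ T), piKronecker (fun i => P (f i)) +
        (piKronecker (fun _ => ∑ j ∈ s, P j) + piKronecker (fun _ => ∑ j ∈ t, P j)) := by
    simp only [piKronecker_sum, Fintype.piFinset_inter]
    rw [← Finset.sum_sdiff hST, add_assoc, Finset.sum_union_inter]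
  rw [sub_sub, sub_eq_iff_eq_add.mpr hsplit]
  exact posSemidef_sum _ fun f _ => PosSemidef.piKronecker fun i => hP (f i)

end Matrix

theorem tensorPow_eq_piKronecker {l : ℕ} (k : ℕ) (X : Matrix (Fin l) (Fin l) ℂ) :
    tensorPow k X = piKronecker fun _ => X := rfl

theorem tensorPow_strongly_superadditive_general {l : ℕ} (k : ℕ)
    (A B C : Matrix (Fin l) (Fin l) ℂ)
    (hA : A.PosSemidef) (hB : B.PosSemidef) (hC : C.PosSemidef) :
    (tensorPow k (A + B + C) + tensorPow k C -
        tensorPow k (A + C) - tensorPow k (B + C)).PosSemidef := by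
  have hP : ∀ j, (![A, B, C] j).PosSemidef := by
    intro j
    fin_cases j <;> assumption
  have h := Matrix.posSemidef_piKronecker_sum_union_add_inter_sub_sub (ι := Fin k) hP {0, 2} {1, 2}
  have hunion : ({0, 2} ∪ {1, 2} : Finset (Fin 3)) = {0, 1, 2} := by decide
  have hinter : ({0, 2} ∩ {1, 2} : Finset (Fin 3)) = {2} := by decide
  rw [hunion, hinter] at h
  simpa [tensorPow_eq_piKronecker, add_assoc] using h

/-- Kronecker powers are strongly superadditive over the cone of positive
semidefinite matrices, in the Loewner order. -/
theorem tensorPow_strongly_superadditive {l : ℕ} (k : ℕ) (hk : 0 < k)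
    (A B C : Matrix (Fin l) (Fin l) ℂ)
    (hA : A.PosSemidef) (hB : B.PosSemidef) (hC : C.PosSemidef) :
    (tensorPow k (A + B + C) + tensorPow k C -
        tensorPow k (A + C) - tensorPow k (B + C)).PosSemidef :=
  tensorPow_strongly_superadditive_general k A B C hA hB hC
end

section
/- Let G be a subgroup of the symmetric group S_n and let χ : G → ℂ be a character of degree 1 (a group homomorphism into the complex numbers whose values have modulus one). Let A = [A_{i,j}] be an m×m block matrix with n×n complex blocks that is positive semidefinite as an mn×mn matrix. Then the m×m complex matrix [d_χ^G(A_{i,j})]_{i,j=1}^m is positive semidefinite. That is, generalized matrix functions are completely positive. -/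
open Matrix
open scoped ComplexOrder

/-!
Factor the block matrix as `Cᴴ C`, so that `A i j p q = ⟨c_{i,p}, c_{j,q}⟩` for the columns `c` of `C`.
Then `∏_p A i j p (σ p)` is the inner product of the pure tensors `⊗_p c_{i,p}` and `⊗_p c_{j,σ p}`,
and, since `χ` is unitary, `|G| · d_χ^G(A i j) = ⟨v_i, v_j⟩` for the symmetrized tensors
`v_i = ∑_{σ ∈ G} χ(σ) ⊗_p c_{i,σ p}`. A Gram matrix is positive semidefinite.
-/

namespace Matrix

variable {ι κ : Type*} [Fintype ι] [Fintype κ]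

lemma PosSemidef.exists_eq_conjTranspose_mul_self_s12 {𝕜 : Type*} [RCLike 𝕜] {M : Matrix ι ι 𝕜}
    (hM : M.PosSemidef) : ∃ B : Matrix ι ι 𝕜, M = Bᴴ * B := by
  classical
  open scoped MatrixOrder Matrix.Norms.L2Operator in
  exact CStarAlgebra.nonneg_iff_eq_star_mul_self.mp hM.nonneg

lemma posSemidef_of_star_dotProduct {R : Type*} [CommRing R] [PartialOrder R] [StarRing R]
    [StarOrderedRing R] (v : ι → κ → R) : (of fun i j => star (v i) ⬝ᵥ v j).PosSemidef := by
  convert posSemidef_conjTranspose_mul_self (of v)ᵀ using 1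
  ext i j
  simp [mul_apply, dotProduct]

end Matrix

/-- The elementary tensor `x₁ ⊗ ⋯ ⊗ x_n` in `(κ → R)^{⊗ι} ≅ (ι → κ) → R`. -/
def pureTensor {ι κ R : Type*} [Fintype ι] [CommMonoid R] (x : ι → κ → R) : (ι → κ) → R :=
  fun f => ∏ p, x p (f p)

lemma star_pureTensor_dotProduct_pureTensor {ι κ R : Type*} [Fintype ι] [DecidableEq ι]
    [Fintype κ] [CommSemiring R] [StarRing R] (x y : ι → κ → R) :
    star (pureTensor x) ⬝ᵥ pureTensor y = ∏ p, star (x p) ⬝ᵥ y p := by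
  simp only [dotProduct, Fintype.prod_sum, pureTensor, Pi.star_apply, star_prod,
    Finset.prod_mul_distrib]

lemma star_eq_map_inv_of_norm_eq_one {G : Type*} [Group G] (χ : G →* ℂ)
    (hχ : ∀ g, ‖χ g‖ = 1) (g : G) : star (χ g) = χ g⁻¹ := by
  rw [map_inv, Complex.inv_def, Complex.normSq_eq_norm_sq, hχ g]
  simp

section

open scoped Classical

variable {n : ℕ} (G : Subgroup (Equiv.Perm (Fin n))) (χ : G →* ℂ)

lemma sum_mul_prod_translate_eq_gmf (A : Matrix (Fin n) (Fin n) ℂ) (τ : G) :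
    ∑ σ : G, χ (σ * τ⁻¹) * ∏ p, A ((τ : Equiv.Perm (Fin n)) p) ((σ : Equiv.Perm (Fin n)) p)
      = gmf G χ A := by
  rw [gmf, ← Equiv.sum_comp (Equiv.mulRight τ)]
  refine Finset.sum_congr rfl fun ρ _ => ?_
  simp only [Equiv.coe_mulRight, mul_inv_cancel_right, Subgroup.coe_mul, Equiv.Perm.mul_apply]
  rw [Equiv.prod_comp (τ : Equiv.Perm (Fin n)) fun p => A p ((ρ : Equiv.Perm (Fin n)) p)]

/-- The image of `x₁ ⊗ ⋯ ⊗ x_n` under the symmetrizer `∑_{σ ∈ G} χ(σ) σ`. -/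
noncomputable def symmTensor {κ : Type*} (x : Fin n → κ → ℂ) : (Fin n → κ) → ℂ :=
  ∑ σ : G, χ σ • pureTensor fun p => x ((σ : Equiv.Perm (Fin n)) p)

lemma star_symmTensor_dotProduct_symmTensor (hχ : ∀ g : G, ‖χ g‖ = 1) {κ : Type*} [Fintype κ]
    (x y : Fin n → κ → ℂ) :
    star (symmTensor G χ x) ⬝ᵥ symmTensor G χ y
      = Fintype.card G * gmf G χ (of fun p q => star (x p) ⬝ᵥ y q) := by
  calc star (symmTensor G χ x) ⬝ᵥ symmTensor G χ y
      = ∑ τ : G, ∑ σ : G, χ (σ * τ⁻¹) *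
          ∏ p, star (x ((τ : Equiv.Perm (Fin n)) p)) ⬝ᵥ y ((σ : Equiv.Perm (Fin n)) p) := by
        simp only [symmTensor, star_sum, sum_dotProduct, dotProduct_sum, star_smul,
          smul_dotProduct, dotProduct_smul, star_pureTensor_dotProduct_pureTensor, smul_eq_mul,
          star_eq_map_inv_of_norm_eq_one χ hχ, map_mul]
        rw [Finset.sum_comm]
        simp only [Finset.mul_sum]
        exact Fintype.sum_congr _ _ fun τ => Fintype.sum_congr _ _ fun σ => by ring
    _ = ∑ _τ : G, gmf G χ (of fun p q => star (x p) ⬝ᵥ y q) :=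
        Finset.sum_congr rfl fun τ _ => by
          rw [← sum_mul_prod_translate_eq_gmf G χ _ τ]
          simp only [of_apply]
    _ = Fintype.card G * gmf G χ (of fun p q => star (x p) ⬝ᵥ y q) := by
        rw [Finset.sum_const, Finset.card_univ, nsmul_eq_mul]

end

/-- Generalized matrix functions are completely positive: applied blockwise to a
positive semidefinite block matrix, they yield a positive semidefinite matrix. -/
theorem gmf_completely_positive {n m : ℕ}
    (G : Subgroup (Equiv.Perm (Fin n))) (χ : G →* ℂ)
    (hχ : ∀ g : G, ‖χ g‖ = 1)
    (A : Fin m → Fin m → Matrix (Fin n) (Fin n) ℂ)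
    (hA : (blockMx A).PosSemidef) :
    (Matrix.of fun i j => gmf G χ (A i j)).PosSemidef := by
  classical
  obtain ⟨C, hC⟩ := hA.exists_eq_conjTranspose_mul_self_s12
  have hAC : ∀ i j, A i j = of fun p q => star (Cᵀ (i, p)) ⬝ᵥ Cᵀ (j, q) := by
    intro i j
    ext p q
    simpa [blockMx, mul_apply, dotProduct] using congrFun₂ hC (i, p) (j, q)
  set v : Fin m → (Fin n → Fin m × Fin n) → ℂ := fun i => symmTensor G χ fun p => Cᵀ (i, p)
  have hgram : (of fun i j => gmf G χ (A i j))
      = (Fintype.card G : ℂ)⁻¹ • of fun i j => star (v i) ⬝ᵥ v j := by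
    ext i j
    simp [v, star_symmTensor_dotProduct_symmTensor G χ hχ, hAC]
  rw [hgram]
  exact (posSemidef_of_star_dotProduct v).smul (by positivity)
end

section
/- (Hua) Let A = [A_{i,j}] be an m×m block matrix with n×n complex blocks that is positive semidefinite as an mn×mn matrix. Then the m×m complex matrix [det A_{i,j}]_{i,j=1}^m of block determinants is positive semidefinite. That is, the determinant is completely positive. -/
open Matrix
open scoped ComplexOrder

/-!
Factor the block matrix as `Bᴴ * B` and let `C i` be the `i`-th block column of `B`, so that
`A i j = (C i)ᴴ * C j`. The Cauchy–Binet formula, with the sum taken over all maps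
`f : Fin n → Fin m × Fin n` instead of over `n`-subsets of rows, reads
`n! • det ((C i)ᴴ * C j) = ∑ f, star (det (C i)_f) * det (C j)_f`, where `(C i)_f` consists of
the rows `f` of `C i`. So `[det (A i j)]` is `(n!)⁻¹` times the Gram matrix `Gᴴ * G` of
`G f i = det (C i)_f`, which is positive semidefinite.
-/

open Equiv Finset
open scoped Nat

namespace Matrix

theorem det_submatrix_comp_perm {ι α β R : Type*} [Fintype ι] [DecidableEq ι] [CommRing R]
    (M : Matrix α β R) (e : ι → α) (f : ι → β) (σ : Perm ι) :
    det (M.submatrix e (f ∘ σ)) = Perm.sign σ * det (M.submatrix e f) := by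
  rw [← det_permute', submatrix_submatrix]
  rfl

section CauchyBinet

variable {ι κ R : Type*} [Fintype ι] [DecidableEq ι] [Fintype κ] [CommRing R]
  (X : Matrix ι κ R) (Y : Matrix κ ι R)

theorem det_mul_eq_sum_prod_mul_det_submatrix :
    det (X * Y) = ∑ f : ι → κ, (∏ i, Y (f i) i) * det (X.submatrix id f) := by
  simp only [det_apply', mul_apply, prod_univ_sum, Fintype.piFinset_univ, Finset.mul_sum,
    submatrix_apply, id, prod_mul_distrib]
  rw [Finset.sum_comm]
  exact sum_congr rfl fun f _ => sum_congr rfl fun σ _ => by ring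

theorem sum_det_submatrix_mul_sign_mul_prod (σ : Perm ι) :
    ∑ f : ι → κ, det (X.submatrix id f) * ((Perm.sign σ : R) * ∏ i, Y (f (σ i)) i) =
      det (X * Y) := by
  rw [det_mul_eq_sum_prod_mul_det_submatrix]
  refine Fintype.sum_equiv (σ.symm.arrowCongr (Equiv.refl κ)) _ _ fun f => ?_
  change _ = (∏ i, Y (f (σ i)) i) * det (X.submatrix id (f ∘ σ))
  rw [det_submatrix_comp_perm]
  ring

theorem sum_det_submatrix_mul_det_submatrix :
    ∑ f : ι → κ, det (X.submatrix id f) * det (Y.submatrix f id) =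
      (Fintype.card ι)! • det (X * Y) := by
  simp only [det_apply' (Y.submatrix _ id), submatrix_apply, id, Finset.mul_sum]
  rw [Finset.sum_comm]
  simp only [sum_det_submatrix_mul_sign_mul_prod, sum_const, card_univ, Fintype.card_perm]

end CauchyBinet

variable {𝕜 : Type*} [RCLike 𝕜]

theorem PosSemidef.exists_eq_conjTranspose_mul_self_s13 {n : Type*} [Fintype n] [DecidableEq n]
    {A : Matrix n n 𝕜} (hA : A.PosSemidef) : ∃ B : Matrix n n 𝕜, A = Bᴴ * B := by
  open scoped MatrixOrder in
  exact CStarAlgebra.nonneg_iff_eq_star_mul_self.mp hA.nonneg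

theorem posSemidef_det_conjTranspose_mul {ι κ η : Type*} [Fintype ι] [DecidableEq ι]
    [Fintype κ] [Fintype η] (C : η → Matrix κ ι 𝕜) :
    (of fun i j => det ((C i)ᴴ * C j)).PosSemidef := by
  let G : Matrix (ι → κ) η 𝕜 := of fun f i => det ((C i).submatrix f id)
  have hGram : of (fun i j => det ((C i)ᴴ * C j)) = ((Fintype.card ι)! : 𝕜)⁻¹ • (Gᴴ * G) := by
    ext i j
    rw [smul_apply, mul_apply]
    simp only [conjTranspose_apply, of_apply, G, ← det_conjTranspose, conjTranspose_submatrix]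
    rw [sum_det_submatrix_mul_det_submatrix, ← Nat.cast_smul_eq_nsmul 𝕜, smul_smul,
      inv_mul_cancel₀ (Nat.cast_ne_zero.mpr (Nat.factorial_ne_zero _)), one_smul]
  rw [hGram]
  exact (posSemidef_conjTranspose_mul_self G).smul (by positivity)

end Matrix

/-- Hua: the determinant is completely positive; the matrix of block determinants
of a positive semidefinite block matrix is positive semidefinite. -/
theorem det_completely_positive {n m : ℕ}
    (A : Fin m → Fin m → Matrix (Fin n) (Fin n) ℂ)
    (hA : (blockMx A).PosSemidef) :
    (Matrix.of fun i j => (A i j).det).PosSemidef := by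
  obtain ⟨B, hB⟩ := hA.exists_eq_conjTranspose_mul_self_s13
  let C : Fin m → Matrix (Fin m × Fin n) (Fin n) ℂ := fun i => B.submatrix id (i, ·)
  have hblock : ∀ i j, A i j = (C i)ᴴ * C j := fun i j => by
    rw [conjTranspose_submatrix, ← submatrix_mul _ _ _ _ _ Function.bijective_id, ← hB]
    rfl
  simpa only [hblock] using posSemidef_det_conjTranspose_mul C
end
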